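/- arXiv:quant-ph/0505031 — 3 statements merged into one kernel-verified Lean document; each statement's English description precedes it below -/
import Mathlib

section
/- For a pure state of S ⊗ E with E a tensor product of N subenvironments, define the averaged partial information Ī(m) as the average of I(S : E_F) over all fragments F consisting of m subenvironments. Then Ī(m) + Ī(N−m) = 2 H(ρ_S) for all 0 ≤ m ≤ N; i.e., the partial information plot is antisymmetric about the point (N/2, H(ρ_S)). -/
open scoped ComplexConjugate

/-- Von Neumann entropy of a matrix (via eigenvalues when Hermitian). -/
noncomputable def vnEntropy {n : Type} [Fintype n] [DecidableEq n] (M : Matrix n n ℂ) : ℝ :=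
  if h : M.IsHermitian then -∑ i, h.eigenvalues i * Real.log (h.eigenvalues i) else 0

/-- Density matrix of a pure state. -/
noncomputable def pureDensity {n : Type} [Fintype n] (ψ : n → ℂ) : Matrix n n ℂ :=
  Matrix.of fun i j => ψ i * conj (ψ j)

section Fragments
variable {s : Type} [Fintype s] [DecidableEq s] {N : ℕ} {e : Fin N → Type}
  [∀ i, Fintype (e i)] [∀ i, DecidableEq (e i)]

/-- Glue a configuration on a fragment `F` with a configuration on its complement. -/
def glue (F : Finset (Fin N)) (f : ∀ i : {i // i ∈ F}, e i) (g : ∀ i : {i // i ∉ F}, e i) :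
    ∀ i, e i := fun i => if h : i ∈ F then f ⟨i, h⟩ else g ⟨i, h⟩

/-- Reduced state of the system `S`. -/
noncomputable def redS (ψ : s × (∀ i, e i) → ℂ) : Matrix s s ℂ :=
  Matrix.of fun i j => ∑ g : ∀ i, e i, pureDensity ψ (i, g) (j, g)

/-- Reduced state of the fragment `E_F`. -/
noncomputable def redF (ψ : s × (∀ i, e i) → ℂ) (F : Finset (Fin N)) :
    Matrix (∀ i : {i // i ∈ F}, e i) (∀ i : {i // i ∈ F}, e i) ℂ :=
  Matrix.of fun f f' => ∑ p : s × (∀ i : {i // i ∉ F}, e i),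
    pureDensity ψ (p.1, glue F f p.2) (p.1, glue F f' p.2)

/-- Reduced state of the system together with the fragment `E_F`. -/
noncomputable def redSF (ψ : s × (∀ i, e i) → ℂ) (F : Finset (Fin N)) :
    Matrix (s × ∀ i : {i // i ∈ F}, e i) (s × ∀ i : {i // i ∈ F}, e i) ℂ :=
  Matrix.of fun p q => ∑ g : ∀ i : {i // i ∉ F}, e i,
    pureDensity ψ (p.1, glue F p.2 g) (q.1, glue F q.2 g)

/-- Quantum mutual information `I(S : E_F)` between the system and the fragment `F`. -/
noncomputable def miF (ψ : s × (∀ i, e i) → ℂ) (F : Finset (Fin N)) : ℝ :=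
  vnEntropy (redS ψ) + vnEntropy (redF ψ F) - vnEntropy (redSF ψ F)

end Fragments


/-! For a pure state, `ρ_{SF} = A Aᴴ` and, up to transposition and relabelling,
`ρ_{Fᶜ} = Aᴴ A` for one amplitude matrix `A` from `S ⊗ E_F` to `E_{Fᶜ}`. These share their nonzero
spectrum (the Schmidt decomposition), so `H(ρ_{SF}) = H(ρ_{Fᶜ})`, and in `I(S:E_F) + I(S:E_{Fᶜ})`
every term except the two copies of `H(ρ_S)` cancels. Complementation is a bijection between
fragments of size `m` and of size `N - m`, so averaging gives the antisymmetry. -/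

open Polynomial Matrix

section Entropy
variable {m n : Type} [Fintype m] [DecidableEq m] [Fintype n] [DecidableEq n]

lemma vnEntropy_eq_neg_sum_roots_charpoly {M : Matrix n n ℂ} (hM : M.IsHermitian) :
    vnEntropy M = -(M.charpoly.roots.map fun z : ℂ => z.re * Real.log z.re).sum := by
  simp [vnEntropy, dif_pos hM, hM.roots_charpoly_eq_eigenvalues]

lemma vnEntropy_eq_of_X_pow_mul_charpoly_eq {A : Matrix m m ℂ} {B : Matrix n n ℂ}
    (hA : A.IsHermitian) (hB : B.IsHermitian) {a b : ℕ}
    (h : X ^ a * A.charpoly = X ^ b * B.charpoly) :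
    vnEntropy A = vnEntropy B := by
  have hroots := congrArg roots h
  rw [roots_mul (mul_ne_zero (pow_ne_zero _ X_ne_zero) A.charpoly_monic.ne_zero),
    roots_mul (mul_ne_zero (pow_ne_zero _ X_ne_zero) B.charpoly_monic.ne_zero),
    roots_X_pow, roots_X_pow] at hroots
  rw [vnEntropy_eq_neg_sum_roots_charpoly hA, vnEntropy_eq_neg_sum_roots_charpoly hB]
  -- extra zero eigenvalues contribute `0 * log 0 = 0`
  simpa [Multiset.map_nsmul, Multiset.sum_nsmul] using
    congrArg (fun r : Multiset ℂ => (r.map fun z : ℂ => z.re * Real.log z.re).sum) hroots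

end Entropy

section Fragments
variable {s : Type} {N : ℕ} {e : Fin N → Type}

def complConfigEquiv (F : Finset (Fin N)) :
    (∀ i : {i // i ∈ Fᶜ}, e i) ≃ (∀ i : {i // i ∉ F}, e i) where
  toFun f i := f ⟨i.1, Finset.mem_compl.2 i.2⟩
  invFun f i := f ⟨i.1, Finset.mem_compl.1 i.2⟩
  left_inv _ := rfl
  right_inv _ := rfl

def offComplConfigEquiv (F : Finset (Fin N)) :
    (∀ i : {i // i ∉ Fᶜ}, e i) ≃ (∀ i : {i // i ∈ F}, e i) where
  toFun f i := f ⟨i.1, by simp [i.2]⟩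
  invFun f i := f ⟨i.1, by simpa using i.2⟩
  left_inv _ := rfl
  right_inv _ := rfl

lemma glue_compl (F : Finset (Fin N)) (f : ∀ i : {i // i ∈ Fᶜ}, e i)
    (g : ∀ i : {i // i ∉ Fᶜ}, e i) :
    glue Fᶜ f g = glue F (offComplConfigEquiv F g) (complConfigEquiv F f) := by
  funext i
  by_cases h : i ∈ F <;> simp [glue, h, offComplConfigEquiv, complConfigEquiv]

variable [Fintype s] [∀ i, Fintype (e i)]

noncomputable def amplitudeMatrix (ψ : s × (∀ i, e i) → ℂ) (F : Finset (Fin N)) :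
    Matrix (s × ∀ i : {i // i ∈ F}, e i) (∀ i : {i // i ∉ F}, e i) ℂ :=
  Matrix.of fun p g => ψ (p.1, glue F p.2 g)

lemma redSF_eq_amplitudeMatrix_mul_conjTranspose (ψ : s × (∀ i, e i) → ℂ)
    (F : Finset (Fin N)) :
    redSF ψ F = amplitudeMatrix ψ F * (amplitudeMatrix ψ F)ᴴ := by
  ext p q
  simp only [redSF, amplitudeMatrix, pureDensity, of_apply, mul_apply, conjTranspose_apply,
    starRingEnd_apply]

lemma redF_compl_eq_reindex (ψ : s × (∀ i, e i) → ℂ) (F : Finset (Fin N)) :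
    redF ψ Fᶜ = reindex (complConfigEquiv F).symm (complConfigEquiv F).symm
      ((amplitudeMatrix ψ F)ᴴ * amplitudeMatrix ψ F)ᵀ := by
  ext f f'
  simp only [redF, pureDensity, amplitudeMatrix, glue_compl, reindex_apply, submatrix_apply,
    transpose_apply, mul_apply, conjTranspose_apply, of_apply, Equiv.symm_symm,
    starRingEnd_apply]
  exact Fintype.sum_equiv ((Equiv.refl s).prodCongr (offComplConfigEquiv F)) _ _
    fun _ => mul_comm _ _

variable [DecidableEq s] [∀ i, DecidableEq (e i)]

lemma vnEntropy_redF_compl (ψ : s × (∀ i, e i) → ℂ) (F : Finset (Fin N)) :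
    vnEntropy (redF ψ Fᶜ) = vnEntropy (redSF ψ F) := by
  set A := amplitudeMatrix ψ F
  have hcharpoly := charpoly_mul_comm' A Aᴴ
  rw [← charpoly_transpose (Aᴴ * A), ← charpoly_reindex (complConfigEquiv F).symm] at hcharpoly
  rw [redF_compl_eq_reindex, redSF_eq_amplitudeMatrix_mul_conjTranspose]
  exact vnEntropy_eq_of_X_pow_mul_charpoly_eq
    ((isHermitian_conjTranspose_mul_self A).transpose.reindex _)
    (isHermitian_mul_conjTranspose_self A) hcharpoly.symm

lemma miF_add_miF_compl (ψ : s × (∀ i, e i) → ℂ) (F : Finset (Fin N)) :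
    miF ψ F + miF ψ Fᶜ = 2 * vnEntropy (redS ψ) := by
  have hF := vnEntropy_redF_compl ψ F
  have hFc := vnEntropy_redF_compl ψ Fᶜ
  rw [compl_compl] at hFc
  simp only [miF]
  linarith

end Fragments

lemma Finset.sum_powersetCard_card_sub {α M : Type*} [Fintype α] [DecidableEq α]
    [AddCommMonoid M] {m : ℕ} (hm : m ≤ Fintype.card α) (f : Finset α → M) :
    ∑ F ∈ powersetCard (Fintype.card α - m) univ, f F = ∑ F ∈ powersetCard m univ, f Fᶜ := by
  refine sum_nbij' compl compl (fun F hF => ?_) (fun F hF => ?_) (fun F _ => compl_compl F)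
    (fun F _ => compl_compl F) (fun F _ => by rw [compl_compl])
  · rw [mem_powersetCard_univ] at hF ⊢
    rw [card_compl, hF, Nat.sub_sub_self hm]
  · rw [mem_powersetCard_univ] at hF ⊢
    rw [card_compl, hF]

/-- Averaged partial information: the average of `I(S : E_F)` over all fragments of size `m`. -/
noncomputable def avgPI {s : Type} [Fintype s] [DecidableEq s] {N : ℕ} {e : Fin N → Type}
    [∀ i, Fintype (e i)] [∀ i, DecidableEq (e i)]
    (ψ : s × (∀ i, e i) → ℂ) (m : ℕ) : ℝ :=
  (N.choose m : ℝ)⁻¹ * ∑ F ∈ Finset.powersetCard m (Finset.univ : Finset (Fin N)), miF ψ F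

theorem avgPI_antisymm_general
    {s : Type} [Fintype s] [DecidableEq s] {N : ℕ} {e : Fin N → Type}
    [∀ i, Fintype (e i)] [∀ i, DecidableEq (e i)]
    (ψ : s × (∀ i, e i) → ℂ)
    (m : ℕ) (hm : m ≤ N) :
    avgPI ψ m + avgPI ψ (N - m) = 2 * vnEntropy (redS ψ) := by
  have hchoose : (N.choose m : ℝ) ≠ 0 := by exact_mod_cast (Nat.choose_pos hm).ne'
  have hcompl := Finset.sum_powersetCard_card_sub (α := Fin N) (by simpa using hm) (miF ψ)
  rw [Fintype.card_fin] at hcompl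
  rw [avgPI, avgPI, Nat.choose_symm hm, hcompl, ← mul_add, ← Finset.sum_add_distrib]
  simp only [miF_add_miF_compl, Finset.sum_const, Finset.card_powersetCard, Finset.card_univ,
    Fintype.card_fin, nsmul_eq_mul]
  field_simp

/-- Antisymmetry of the partial information plot: `Ī(m) + Ī(N−m) = 2 H(ρ_S)`. -/
theorem avgPI_antisymm
    {s : Type} [Fintype s] [DecidableEq s] {N : ℕ} {e : Fin N → Type}
    [∀ i, Fintype (e i)] [∀ i, DecidableEq (e i)]
    (ψ : s × (∀ i, e i) → ℂ) (hψ : ∑ i, Complex.normSq (ψ i) = 1)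
    (m : ℕ) (hm : m ≤ N) :
    avgPI ψ m + avgPI ψ (N - m) = 2 * vnEntropy (redS ψ) :=
  avgPI_antisymm_general ψ m hm
end

section
/- For integer D ≥ 2, the variance of d under the density p(d) = 2(D−1)e^{−2d}(1−e^{−2d})^{D−2} equals π²/24 − Ψ₁(D)/4, where Ψ₁ is the trigamma function. -/
/-!
Write `n = D - 1`. Expanding `(1 - e^{-2d})^{n-1}` binomially turns the `s`-th moment of the
density into a combination of Gamma integrals, namely `s! / 2^s · S_s(n)` with
`S_r(n) = ∑_{j=1}^n (-1)^{j-1} C(n,j) / j^r`. Pascal's rule and `(n+1) C(n,j) = j C(n+1,j+1)`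
give `S_{r+1}(n+1) = S_{r+1}(n) + S_r(n+1) / (n+1)`, and `S_0(n) = 1` for `n ≥ 1`; hence
`S_1(n) = H_n` and `S_2(n) = (H_n² + H_n^{(2)}) / 2`. The variance is therefore
`S_2(n)/2 - S_1(n)²/4 = H_n^{(2)} / 4`, and `H_n^{(2)} = π²/6 - Ψ₁(n+1)`.
-/

open Real MeasureTheory Set Finset
open scoped Nat

lemma integral_pow_mul_exp_neg_mul_Ioi (n : ℕ) {c : ℝ} (hc : 0 < c) :
    ∫ x in Ioi (0 : ℝ), x ^ n * exp (-c * x) = n ! / c ^ (n + 1) := by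
  have h := integral_rpow_mul_exp_neg_mul_Ioi (a := (n : ℝ) + 1) (by positivity) hc
  rw [add_sub_cancel_right, Gamma_nat_eq_factorial,
    show (n : ℝ) + 1 = ((n + 1 : ℕ) : ℝ) by push_cast; rfl] at h
  simp_rw [rpow_natCast, ← neg_mul] at h
  rw [h, div_pow, one_pow, one_div_mul_eq_div]

lemma integrableOn_pow_mul_exp_neg_mul_Ioi (n : ℕ) {c : ℝ} (hc : 0 < c) :
    IntegrableOn (fun x : ℝ => x ^ n * exp (-c * x)) (Ioi 0) := by
  simpa [rpow_natCast] using integrableOn_rpow_mul_exp_neg_mul_rpow (s := (n : ℝ)) (p := 1)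
    (neg_one_lt_zero.trans_le n.cast_nonneg) zero_lt_one hc

noncomputable def genHarmonic (r n : ℕ) : ℝ := ∑ i ∈ range n, 1 / ((i : ℝ) + 1) ^ r

/-- `S_r(n) = ∑_{j=1}^n (-1)^{j-1} C(n,j) / j^r`, reindexed from `j = 0`. -/
noncomputable def altChooseSum (r n : ℕ) : ℝ :=
  ∑ j ∈ range n, (-1 : ℝ) ^ j * n.choose (j + 1) / ((j : ℝ) + 1) ^ r

lemma genHarmonic_succ (r n : ℕ) :
    genHarmonic r (n + 1) = genHarmonic r n + 1 / ((n : ℝ) + 1) ^ r :=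
  sum_range_succ _ _

lemma altChooseSum_zero_succ (n : ℕ) : altChooseSum 0 (n + 1) = 1 := by
  have h : ∑ i ∈ range (n + 2), (-1 : ℝ) ^ i * ((n + 1).choose i : ℝ) = 0 := by
    exact_mod_cast Int.alternating_sum_range_choose_of_ne n.succ_ne_zero
  rw [sum_range_succ'] at h
  simp only [altChooseSum, pow_zero, div_one]
  simp only [pow_succ, Nat.choose_zero_right, pow_zero, Nat.cast_one, mul_one, mul_neg,
    neg_mul, sum_neg_distrib] at h
  linarith

lemma altChooseSum_succ (r n : ℕ) :
    altChooseSum r (n + 1) =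
      altChooseSum r n +
        ∑ j ∈ range (n + 1), (-1 : ℝ) ^ j * n.choose j / ((j : ℝ) + 1) ^ r := by
  have h : altChooseSum r n =
      ∑ j ∈ range (n + 1), (-1 : ℝ) ^ j * n.choose (j + 1) / ((j : ℝ) + 1) ^ r := by
    simp [altChooseSum, sum_range_succ]
  rw [altChooseSum, h, ← sum_add_distrib]
  refine sum_congr rfl fun j _ => ?_
  rw [Nat.choose_succ_succ, Nat.cast_add]
  ring

lemma succ_mul_sum_choose_div_pow_succ (r n : ℕ) :
    ((n : ℝ) + 1) *
        ∑ j ∈ range (n + 1), (-1 : ℝ) ^ j * n.choose j / ((j : ℝ) + 1) ^ (r + 1) =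
      altChooseSum r (n + 1) := by
  rw [altChooseSum, mul_sum]
  refine sum_congr rfl fun j _ => ?_
  have h : ((n : ℝ) + 1) * n.choose j = (n + 1).choose (j + 1) * ((j : ℝ) + 1) := by
    exact_mod_cast Nat.add_one_mul_choose_eq n j
  have hj : (j : ℝ) + 1 ≠ 0 := by positivity
  rw [pow_succ]
  field_simp
  linear_combination h

lemma altChooseSum_succ_succ (r n : ℕ) :
    altChooseSum (r + 1) (n + 1) = altChooseSum (r + 1) n + altChooseSum r (n + 1) / (n + 1) := by
  rw [altChooseSum_succ, ← succ_mul_sum_choose_div_pow_succ,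
    mul_div_cancel_left₀ _ (by positivity)]

lemma altChooseSum_one (n : ℕ) : altChooseSum 1 n = genHarmonic 1 n := by
  induction n with
  | zero => simp [altChooseSum, genHarmonic]
  | succ n ih => rw [altChooseSum_succ_succ, altChooseSum_zero_succ, ih, genHarmonic_succ, pow_one]

lemma altChooseSum_two (n : ℕ) :
    altChooseSum 2 n = (genHarmonic 1 n ^ 2 + genHarmonic 2 n) / 2 := by
  induction n with
  | zero => simp [altChooseSum, genHarmonic]
  | succ n ih =>
    have hn : (n : ℝ) + 1 ≠ 0 := by positivity
    rw [altChooseSum_succ_succ, altChooseSum_one, ih, genHarmonic_succ, genHarmonic_succ]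
    field_simp
    ring

lemma pow_mul_density_eq_sum (s m : ℕ) (d : ℝ) :
    d ^ s * (2 * ((m : ℝ) + 1) * exp (-2 * d) * (1 - exp (-2 * d)) ^ m) =
      ∑ j ∈ range (m + 1), (-1 : ℝ) ^ j * m.choose j * (2 * ((m : ℝ) + 1)) *
        (d ^ s * exp (-(2 * ((j : ℝ) + 1)) * d)) := by
  rw [sub_eq_neg_add, add_pow, mul_sum, mul_sum]
  refine sum_congr rfl fun j _ => ?_
  rw [show -(2 * ((j : ℝ) + 1)) * d = j * (-2 * d) + -2 * d by ring, exp_add, exp_nat_mul,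
    neg_pow]
  ring

lemma integral_pow_mul_density (s m : ℕ) :
    ∫ d in Ioi (0 : ℝ), d ^ s * (2 * ((m : ℝ) + 1) * exp (-2 * d) * (1 - exp (-2 * d)) ^ m) =
      s ! / 2 ^ s * altChooseSum s (m + 1) := by
  have hc (j : ℕ) : (0 : ℝ) < 2 * ((j : ℝ) + 1) := by positivity
  simp_rw [pow_mul_density_eq_sum]
  rw [integral_finsetSum _ fun j _ => (integrableOn_pow_mul_exp_neg_mul_Ioi s (hc j)).const_mul _,
    ← succ_mul_sum_choose_div_pow_succ, mul_sum, mul_sum]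
  refine sum_congr rfl fun j _ => ?_
  rw [integral_const_mul, integral_pow_mul_exp_neg_mul_Ioi s (hc j), mul_pow]
  have hj : (j : ℝ) + 1 ≠ 0 := by positivity
  field_simp
  ring

lemma tsum_one_div_add_succ_sq (n : ℕ) :
    ∑' k : ℕ, 1 / ((k : ℝ) + (n + 1)) ^ 2 = π ^ 2 / 6 - genHarmonic 2 n := by
  have h := (hasSum_nat_add_iff' (n + 1)).mpr hasSum_zeta_two
  rw [sum_range_succ'] at h
  push_cast at h
  rw [genHarmonic]
  simpa [add_assoc] using h.tsum_eq

/-- The variance of `d` under the density `p(d) = 2(D−1)e^{−2d}(1−e^{−2d})^{D−2}` equals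
`π²/24 − Ψ₁(D)/4`, where `Ψ₁(D) = Σ_{k=D}^∞ 1/k²` is the trigamma function. -/
theorem variance_decoherence_factor (D : ℕ) (hD : 2 ≤ D) :
    (∫ d in Set.Ici (0 : ℝ),
        d ^ 2 * (2 * ((D : ℝ) - 1) * Real.exp (-2 * d) * (1 - Real.exp (-2 * d)) ^ (D - 2)))
      - (∫ d in Set.Ici (0 : ℝ),
          d * (2 * ((D : ℝ) - 1) * Real.exp (-2 * d) * (1 - Real.exp (-2 * d)) ^ (D - 2))) ^ 2
      = Real.pi ^ 2 / 24 - (∑' k : ℕ, (1 : ℝ) / ((k : ℝ) + (D : ℝ)) ^ 2) / 4 := by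
  obtain ⟨m, rfl⟩ : ∃ m, D = m + 2 := ⟨D - 2, by omega⟩
  have hmean := integral_pow_mul_density 1 m
  simp_rw [pow_one] at hmean
  have hψ := tsum_one_div_add_succ_sq (m + 1)
  push_cast at hψ ⊢
  rw [show (m : ℝ) + 2 - 1 = m + 1 by ring, integral_Ici_eq_integral_Ioi,
    integral_Ici_eq_integral_Ioi, integral_pow_mul_density, hmean,
    show (m : ℝ) + 2 = m + 1 + 1 by ring, hψ,
    altChooseSum_two, altChooseSum_one]
  norm_num [Nat.factorial]
  ring
end

section
/- Page's average entropy satisfies the bound H̄(m,n) = Σ_{k=n+1}^{mn} 1/k − (m−1)/(2n) ≤ log m for all integers 1 ≤ m ≤ n, with equality iff m = 1. -/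
/-!
Each term `1/(k+1)` is at most `log (k+1) - log k`, so the harmonic block from `n+1` to `mn`
telescopes to at most `log (mn) - log n = log m`. The subtracted correction `(m-1)/(2n)` is
nonnegative, and strictly positive as soon as `m ≥ 2`, which gives the bound and its equality case.
-/

open Finset Real

lemma inv_add_one_le_log_add_one_sub_log {x : ℝ} (hx : 0 < x) :
    (x + 1)⁻¹ ≤ log (x + 1) - log x := by
  have h := one_sub_inv_le_log_of_pos (div_pos (by linarith : 0 < x + 1) hx)
  rwa [inv_div, log_div (by linarith) hx.ne', one_sub_div (by linarith), add_sub_cancel_left,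
    one_div] at h

lemma sum_Icc_inv_le_log_sub_log {a b : ℕ} (ha : 0 < a) (hab : a ≤ b) :
    ∑ k ∈ Icc (a + 1) b, (k : ℝ)⁻¹ ≤ log b - log a := by
  induction b, hab using Nat.le_induction with
  | base => simp
  | succ b hab ih =>
    have hb : (0 : ℝ) < b := by exact_mod_cast ha.trans_le hab
    rw [sum_Icc_succ_top (by omega), Nat.cast_succ]
    linarith [inv_add_one_le_log_add_one_sub_log hb]

lemma sum_Icc_inv_le_log {m n : ℕ} (hm : 1 ≤ m) (hn : 0 < n) :
    ∑ k ∈ Icc (n + 1) (m * n), (k : ℝ)⁻¹ ≤ log m := by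
  have h := sum_Icc_inv_le_log_sub_log hn (Nat.le_mul_of_pos_left n hm)
  have hm' : (m : ℝ) ≠ 0 := by positivity
  have hn' : (n : ℝ) ≠ 0 := by positivity
  rwa [Nat.cast_mul, log_mul hm' hn', add_sub_cancel_right] at h

/-- Page's average entropy satisfies `H̄(m,n) = Σ_{k=n+1}^{mn} 1/k − (m−1)/(2n) ≤ log m`,
with equality iff `m = 1`. -/
theorem page_entropy_le_log (m n : ℕ) (h1 : 1 ≤ m) (h2 : m ≤ n) :
    ((∑ k ∈ Finset.Icc (n + 1) (m * n), (1 : ℝ) / (k : ℝ)) - ((m : ℝ) - 1) / (2 * (n : ℝ))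
        ≤ Real.log m) ∧
    (((∑ k ∈ Finset.Icc (n + 1) (m * n), (1 : ℝ) / (k : ℝ)) - ((m : ℝ) - 1) / (2 * (n : ℝ))
        = Real.log m) ↔ m = 1) := by
  have hn : 0 < n := by omega
  have hsum := sum_Icc_inv_le_log h1 hn
  have hn' : (0 : ℝ) < 2 * n := by positivity
  have hm : (1 : ℝ) ≤ m := by exact_mod_cast h1
  have hcorr : 0 ≤ ((m : ℝ) - 1) / (2 * n) := div_nonneg (by linarith) hn'.le
  simp only [one_div] at hsum ⊢
  refine ⟨by linarith, fun heq => ?_, fun hm1 => by subst hm1; simp⟩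
  by_contra hne
  have hm2 : (2 : ℝ) ≤ m := by exact_mod_cast (show 2 ≤ m by omega)
  have hpos : 0 < ((m : ℝ) - 1) / (2 * n) := div_pos (by linarith) hn'
  linarith
end
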